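/- arXiv:1610.03972 — 2 statements merged into one kernel-verified Lean document; each statement's English description precedes it below -/
import Mathlib

section
/- If G is a connected graph in class W_2 with G ≠ K_2, then G has no vertex of degree 1. -/
open Finset

/-- A finset of vertices is independent: no two of its members are adjacent. -/
def IndepSet {V : Type*} (G : SimpleGraph V) (A : Finset V) : Prop :=
  ∀ u ∈ A, ∀ v ∈ A, ¬ G.Adj u v

open scoped Classical in
/-- Maximum size of an independent set contained in `s` (independence number of `G[s]`). -/
noncomputable def alphaOn {V : Type*} [Fintype V] (G : SimpleGraph V) (s : Finset V) : ℕ :=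
  ((s.powerset).filter (fun A => IndepSet G A)).sup Finset.card

/-- The independence number of `G`. -/
noncomputable def alpha {V : Type*} [Fintype V] (G : SimpleGraph V) : ℕ :=
  alphaOn G Finset.univ

/-- The induced subgraph `G[s]` is well-covered: every maximal independent subset of `s`
has maximum cardinality. -/
def WellCoveredOn {V : Type*} [Fintype V] (G : SimpleGraph V) (s : Finset V) : Prop :=
  ∀ A ⊆ s, IndepSet G A →
    (∀ B ⊆ s, IndepSet G B → A ⊆ B → A = B) → A.card = alphaOn G s

/-- `G` is well-covered. -/
def WellCovered {V : Type*} [Fintype V] (G : SimpleGraph V) : Prop :=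
  WellCoveredOn G Finset.univ

open scoped Classical in
/-- The open neighborhood `N(A)`: vertices having a neighbor in `A`. -/
noncomputable def nbhd {V : Type*} [Fintype V] (G : SimpleGraph V) (A : Finset V) : Finset V :=
  Finset.univ.filter (fun v => ∃ u ∈ A, G.Adj u v)

/-- The closed neighborhood `N[A] = A ∪ N(A)`. -/
noncomputable def closedNbhd {V : Type*} [Fintype V] [DecidableEq V] (G : SimpleGraph V) (A : Finset V) :
    Finset V :=
  A ∪ nbhd G A

/-- The induced subgraph `G[s]` is in class `W₂`: every two disjoint independent subsets of `s`
extend to two disjoint maximum independent subsets of `s`. -/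
def W2On {V : Type*} [Fintype V] (G : SimpleGraph V) (s : Finset V) : Prop :=
  ∀ A ⊆ s, ∀ B ⊆ s, IndepSet G A → IndepSet G B → Disjoint A B →
    ∃ S₁ ⊆ s, ∃ S₂ ⊆ s, IndepSet G S₁ ∧ IndepSet G S₂ ∧
      S₁.card = alphaOn G s ∧ S₂.card = alphaOn G s ∧ Disjoint S₁ S₂ ∧ A ⊆ S₁ ∧ B ⊆ S₂

/-- `G` belongs to class `W₂`. -/
def W2 {V : Type*} [Fintype V] (G : SimpleGraph V) : Prop :=
  W2On G Finset.univ

/-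
Let `v` be a leaf with neighbour `u`. If `u` had another neighbour `w`, then `N(v) = {u} ⊆ N(w)`.
Extend the disjoint independent sets `{w}` and `{v}` to disjoint maximum independent sets
`S₁ ∋ w` and `S₂ ∋ v`: then `v ∉ S₁`, and no neighbour of `v` lies in `S₁` since they are all
neighbours of `w ∈ S₁`, so `S₁ ∪ {v}` is a larger independent set. Hence `N(u) = {v}` as well,
and connectivity forces `G = K₂`.
-/

section IndepSet

variable {V : Type*} {G : SimpleGraph V}

lemma indepSet_singleton (v : V) : IndepSet G {v} := by
  simp only [IndepSet, mem_singleton]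
  rintro a rfl b rfl
  exact G.irrefl

lemma IndepSet.insert [DecidableEq V] {S : Finset V} {v : V} (hS : IndepSet G S)
    (hv : ∀ x ∈ S, ¬ G.Adj v x) : IndepSet G (insert v S) := by
  simp only [IndepSet, mem_insert]
  rintro a (rfl | ha) b (rfl | hb)
  · exact G.irrefl
  · exact hv b hb
  · exact fun hab => hv a ha hab.symm
  · exact hS a ha b hb

lemma IndepSet.card_le_alphaOn [Fintype V] {s A : Finset V} (hAs : A ⊆ s)
    (hA : IndepSet G A) : A.card ≤ alphaOn G s := by
  classical
  exact le_sup (mem_filter.mpr ⟨mem_powerset.mpr hAs, hA⟩)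

lemma W2.not_neighborSet_subset [Fintype V] (hG : W2 G) {v w : V} (hvw : v ≠ w) :
    ¬ G.neighborSet v ⊆ G.neighborSet w := by
  classical
  intro hN
  obtain ⟨S₁, -, S₂, -, hS₁, -, hcard, -, hdisj, hwS₁, hvS₂⟩ :=
    hG {w} (subset_univ _) {v} (subset_univ _) (indepSet_singleton w) (indepSet_singleton v)
      (disjoint_singleton.mpr hvw.symm)
  have hw : w ∈ S₁ := singleton_subset_iff.mp hwS₁
  have hv : v ∉ S₁ := disjoint_right.mp hdisj (singleton_subset_iff.mp hvS₂)
  have hindep : IndepSet G (insert v S₁) :=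
    hS₁.insert fun x hx hvx => hS₁ w hw x hx (hN hvx)
  have := hindep.card_le_alphaOn (subset_univ _)
  rw [card_insert_of_notMem hv, hcard] at this
  exact Nat.not_succ_le_self _ this

end IndepSet

namespace SimpleGraph

variable {V : Type*} {G : SimpleGraph V}

lemma Reachable.mem_of_forall_adj {s : Set V} (hs : ∀ a b, G.Adj a b → a ∈ s → b ∈ s)
    {u w : V} (huw : G.Reachable u w) (hu : u ∈ s) : w ∈ s := by
  obtain ⟨p⟩ := huw
  induction p with
  | nil => exact hu
  | cons hab _ ih => exact ih (hs _ _ hab hu)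

lemma nonempty_iso_top_fin_two [Fintype V] {u v : V} (huv : G.Adj u v)
    (hV : ∀ x, x = u ∨ x = v) : Nonempty (G ≃g (⊤ : SimpleGraph (Fin 2))) := by
  classical
  have hG : G = ⊤ := by
    ext x y
    rcases hV x with rfl | rfl <;> rcases hV y with rfl | rfl <;>
      simp [huv, huv.symm, huv.ne, huv.ne.symm]
  have hcard : Fintype.card V = 2 := by
    rw [← card_univ, show (univ : Finset V) = {u, v} by ext x; simpa using hV x]
    exact card_pair huv.ne
  subst hG
  exact ⟨Iso.completeGraph (Fintype.equivFinOfCardEq hcard)⟩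

end SimpleGraph

/-- A connected graph in W₂ other than K₂ has no vertex of degree 1. -/
theorem stmt4 {V : Type*} [Fintype V] (G : SimpleGraph V) [DecidableRel G.Adj]
    (hconn : G.Connected) (hK2 : ¬ Nonempty (G ≃g (⊤ : SimpleGraph (Fin 2))))
    (h : W2 G) :
    ∀ v : V, G.degree v ≠ 1 := by
  intro v hdeg
  obtain ⟨u, hvu, hNv⟩ := SimpleGraph.degree_eq_one_iff_existsUnique_adj.mp hdeg
  have hNu : ∀ w, G.Adj u w → w = v := by
    intro w huw
    by_contra hwv
    refine h.not_neighborSet_subset (Ne.symm hwv) fun x hvx => ?_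
    rw [SimpleGraph.mem_neighborSet, hNv x hvx]
    exact huw.symm
  have hV : ∀ x, x = v ∨ x = u := fun x =>
    (hconn.preconnected v x).mem_of_forall_adj (s := {v, u})
      (by rintro a b hab (rfl | rfl); exacts [Or.inr (hNv b hab), Or.inl (hNu b hab)])
      (Or.inl rfl)
  exact hK2 (SimpleGraph.nonempty_iso_top_fin_two hvu hV)
end

section
/- If G is a connected graph in class W_2 with G ≠ K_2, then α(G) ≤ μ(G) and α(G) + μ(G) ≤ |V(G)| − 1, where μ(G) is the maximum matching number. -/
/-!
W₂ applied to two empty sets gives disjoint maximum independent sets `S₁`, `S₂`. For `X ⊆ S₁` the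
set `(S₂ \ N(X)) ∪ X` is independent, which is Hall's condition for matching `S₁` into `S₂`; hence
`α ≤ μ`. Each edge of a matching has an endpoint outside `S₁` and each vertex lies on at most one
of its edges, so `μ + α ≤ n` and `2μ ≤ n`. Equality `μ + α = n` would force `2α = n`, so that any
two disjoint maximum independent sets bipartition `G`. For `α ≥ 2`, applying W₂ to two vertices on
the same side of one bipartition gives a second bipartition separating them, impossible in a
connected graph; for `α = 1` the graph is `K₂`.
-/

open Finset

/-- The matching number of G: the maximum number of edges of a matching in G. -/
noncomputable def matchNum {V : Type*} [Fintype V] (G : SimpleGraph V) : ℕ :=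
  sSup {n : ℕ | ∃ M : G.Subgraph, M.IsMatching ∧ M.edgeSet.ncard = n}

section IndependentSets

variable {V : Type*} {G : SimpleGraph V}

lemma indepSet_empty : IndepSet G ∅ := by
  simp [IndepSet]

lemma IndepSet.subset {A B : Finset V} (hB : IndepSet G B) (hAB : A ⊆ B) : IndepSet G A :=
  fun u hu v hv => hB u (hAB hu) v (hAB hv)

lemma IndepSet.notMem_iff_of_adj [Fintype V] [DecidableEq V] {S : Finset V}
    (hS : IndepSet G S) (hSc : IndepSet G Sᶜ) {x y : V} (hxy : G.Adj x y) :
    x ∉ S ↔ y ∈ S := by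
  constructor
  · intro hx
    by_contra hy
    exact hSc x (mem_compl.mpr hx) y (mem_compl.mpr hy) hxy
  · exact fun hy hx => hS x hx y hy hxy

variable [Fintype V]

lemma IndepSet.card_le_alpha {A : Finset V} (hA : IndepSet G A) : A.card ≤ alpha G := by
  classical
  exact le_sup (f := Finset.card) (mem_filter.mpr ⟨mem_powerset.mpr (subset_univ A), hA⟩)

lemma eq_top_of_alpha_le_one (hα : alpha G ≤ 1) : G = ⊤ := by
  classical
  ext x y
  refine ⟨G.ne_of_adj, fun hxy => ?_⟩
  by_contra hnadj
  have hpair : IndepSet G {x, y} := by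
    simp only [IndepSet, mem_insert, mem_singleton]
    rintro u (rfl | rfl) v (rfl | rfl) <;> simp_all [G.adj_comm]
  have := hpair.card_le_alpha
  rw [card_pair hxy] at this
  omega

lemma W2.two_mul_alpha_le_card (h : W2 G) : 2 * alpha G ≤ Fintype.card V := by
  classical
  obtain ⟨S₁, -, S₂, -, -, -, hc₁, hc₂, hd, -, -⟩ :=
    h ∅ (empty_subset _) ∅ (empty_subset _) indepSet_empty indepSet_empty (disjoint_empty_left _)
  calc 2 * alpha G = (S₁ ∪ S₂).card := by rw [card_union_of_disjoint hd, hc₁, hc₂, two_mul]; rfl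
    _ ≤ Fintype.card V := card_le_univ _

lemma W2.exists_bipartition [DecidableEq V] (h : W2 G) (hn : Fintype.card V ≤ 2 * alpha G)
    {A B : Finset V} (hA : IndepSet G A) (hB : IndepSet G B) (hAB : Disjoint A B) :
    ∃ S : Finset V, IndepSet G S ∧ IndepSet G Sᶜ ∧ A ⊆ S ∧ B ⊆ Sᶜ := by
  obtain ⟨S₁, -, S₂, -, h₁, h₂, hc₁, hc₂, hd, hA₁, hB₂⟩ :=
    h A (subset_univ _) B (subset_univ _) hA hB hAB
  have hS₂ : S₂ = S₁ᶜ := by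
    refine eq_of_subset_of_card_le (subset_compl_iff_disjoint_left.mpr hd) ?_
    rw [card_compl, hc₁, hc₂]
    change Fintype.card V - alpha G ≤ alpha G
    omega
  exact ⟨S₁, h₁, hS₂ ▸ h₂, hA₁, hS₂ ▸ hB₂⟩

end IndependentSets

lemma SimpleGraph.Preconnected.iff_of_forall_adj {V : Type*} {G : SimpleGraph V}
    (hG : G.Preconnected) {p : V → Prop} (hp : ∀ x y, G.Adj x y → (p x ↔ p y)) (x y : V) :
    p x ↔ p y := by
  obtain ⟨w⟩ := hG x y
  induction w with
  | nil => rfl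
  | cons hadj _ ih => exact (hp _ _ hadj).trans ih

section W2Bipartite

variable {V : Type*} [Fintype V] {G : SimpleGraph V}

lemma W2.two_mul_alpha_lt_card (h : W2 G) (hconn : G.Connected)
    (hK2 : ¬ Nonempty (G ≃g (⊤ : SimpleGraph (Fin 2)))) :
    2 * alpha G < Fintype.card V := by
  classical
  by_contra! hn
  have hcard : Fintype.card V = 2 * alpha G := le_antisymm hn h.two_mul_alpha_le_card
  obtain ⟨S, hS, hSc, -, -⟩ :=
    h.exists_bipartition hn indepSet_empty indepSet_empty (disjoint_empty_left _)
  have hSα : S.card = alpha G := by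
    have := hSc.card_le_alpha
    rw [card_compl] at this
    have := hS.card_le_alpha
    omega
  rcases Nat.lt_or_ge (alpha G) 2 with hα | hα
  · have htop := eq_top_of_alpha_le_one (Nat.le_of_lt_succ hα)
    have hα1 : 1 ≤ alpha G := by
      obtain ⟨v⟩ := hconn.nonempty
      simpa using (indepSet_singleton (G := G) v).card_le_alpha
    subst htop
    exact hK2 ⟨SimpleGraph.Iso.completeGraph (Fintype.equivFinOfCardEq (by omega))⟩
  · obtain ⟨u, hu, u', hu', hne⟩ := one_lt_card.mp (by omega : 1 < S.card)
    obtain ⟨T, hT, hTc, huT, hu'T⟩ := h.exists_bipartition hn (indepSet_singleton u)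
      (indepSet_singleton u') (disjoint_singleton.mpr hne)
    have hsame := hconn.preconnected.iff_of_forall_adj (p := fun x => x ∈ S ↔ x ∈ T)
      (fun x y hxy => by
        have := hS.notMem_iff_of_adj hSc hxy
        have := hT.notMem_iff_of_adj hTc hxy
        tauto) u u'
    simp only [hu, hu', true_iff, singleton_subset_iff] at hsame huT hu'T
    exact mem_compl.mp hu'T (hsame.mp huT)

end W2Bipartite

namespace SimpleGraph.Subgraph.IsMatching

variable {V : Type*} {G : SimpleGraph V} {M : G.Subgraph}

lemma eq_of_mem_of_mem (hM : M.IsMatching) {e e' : Sym2 V} (he : e ∈ M.edgeSet)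
    (he' : e' ∈ M.edgeSet) {v : V} (hv : v ∈ e) (hv' : v ∈ e') : e = e' := by
  obtain ⟨a, rfl⟩ := Sym2.mem_iff_exists.mp hv
  obtain ⟨b, rfl⟩ := Sym2.mem_iff_exists.mp hv'
  obtain ⟨w, -, hw⟩ := hM (M.edge_vert he)
  rw [hw a he, hw b he']

variable [Fintype V]

lemma ncard_edgeSet_mul_le [DecidableEq V] (hM : M.IsMatching) (T : Finset V) {m : ℕ}
    (hm : ∀ e ∈ M.edgeSet, m ≤ (T.filter (· ∈ e)).card) : M.edgeSet.ncard * m ≤ T.card := by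
  classical
  rw [Set.ncard_eq_toFinset_card']
  simpa using card_mul_le_card_mul (fun e v => v ∈ e) (s := M.edgeSet.toFinset) (t := T) (n := 1)
    (fun e he => hm e (Set.mem_toFinset.mp he))
    (fun v _ => card_le_one.mpr fun e he e' he' => by
      simp only [mem_bipartiteBelow, Set.mem_toFinset] at he he'
      exact hM.eq_of_mem_of_mem he.1 he'.1 he.2 he'.2)

lemma two_mul_ncard_edgeSet_le (hM : M.IsMatching) : 2 * M.edgeSet.ncard ≤ Fintype.card V := by
  classical
  rw [mul_comm]
  refine hM.ncard_edgeSet_mul_le univ fun e he => ?_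
  induction e using Sym2.ind with
  | _ a b =>
    calc 2 = ({a, b} : Finset V).card := (card_pair (M.adj_sub he).ne).symm
      _ ≤ (univ.filter (· ∈ s(a, b))).card := card_le_card fun v hv => by simp_all

lemma ncard_edgeSet_add_card_le (hM : M.IsMatching) {S : Finset V} (hS : IndepSet G S) :
    M.edgeSet.ncard + S.card ≤ Fintype.card V := by
  classical
  have := hM.ncard_edgeSet_mul_le Sᶜ (m := 1) fun e he => by
    induction e using Sym2.ind with
    | _ a b =>
      refine one_le_card.mpr ?_
      by_cases ha : a ∈ S
      · exact ⟨b, by simpa using fun hb => hS a ha b hb (M.adj_sub he)⟩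
      · exact ⟨a, by simpa using ha⟩
  rw [card_compl] at this
  have := card_le_univ S
  omega

end SimpleGraph.Subgraph.IsMatching

lemma IndepSet.card_le_ncard_edgeSet {V : Type*} [Fintype V] {G : SimpleGraph V} {M : G.Subgraph}
    (hM : M.IsMatching) {S : Finset V} (hS : IndepSet G S) (hSM : ↑S ⊆ M.verts) :
    S.card ≤ M.edgeSet.ncard := by
  classical
  rw [Set.ncard_eq_toFinset_card']
  refine card_le_card_of_forall_subsingleton (fun v e => v ∈ e) (fun v hv => ?_) fun e he => ?_
  · obtain ⟨w, hw, -⟩ := hM (hSM hv)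
    exact ⟨s(v, w), Set.mem_toFinset.mpr hw, Sym2.mem_mk_left v w⟩
  · rintro x ⟨hxS, hxe⟩ y ⟨hyS, hye⟩
    by_contra hxy
    rw [Set.mem_toFinset, (Sym2.mem_and_mem_iff hxy).mp ⟨hxe, hye⟩] at he
    exact hS x hxS y hyS (M.adj_sub he)

section Hall

variable {V : Type*} [Fintype V] {G : SimpleGraph V}

/-- Hall's condition: `(B \ N(A)) ∪ A` is independent, so it is no larger than `B`. -/
lemma IndepSet.card_le_card_inter_nbhd [DecidableEq V] {A B : Finset V} (hA : IndepSet G A)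
    (hB : IndepSet G B) (hBα : alpha G ≤ B.card) (hAB : Disjoint A B) :
    A.card ≤ (B ∩ nbhd G A).card := by
  have hmem : ∀ {u v}, u ∈ A → G.Adj u v → v ∈ nbhd G A := fun hu huv => by
    simp only [nbhd, mem_filter, mem_univ, true_and]
    exact ⟨_, hu, huv⟩
  have hindep : IndepSet G ((B \ (B ∩ nbhd G A)) ∪ A) := by
    intro u hu v hv huv
    simp only [mem_union, mem_sdiff, mem_inter, not_and] at hu hv
    rcases hu with ⟨huB, huN⟩ | huA <;> rcases hv with ⟨hvB, hvN⟩ | hvA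
    · exact hB u huB v hvB huv
    · exact huN huB (hmem hvA huv.symm)
    · exact hvN hvB (hmem huA huv)
    · exact hA u huA v hvA huv
  have hdisj : Disjoint (B \ (B ∩ nbhd G A)) A :=
    disjoint_of_subset_left sdiff_subset hAB.symm
  have := hindep.card_le_alpha
  rw [card_union_of_disjoint hdisj, card_sdiff_of_subset inter_subset_left] at this
  have := card_le_card (inter_subset_left : B ∩ nbhd G A ⊆ B)
  omega

lemma IndepSet.exists_isMatching_verts_eq_union {A B : Finset V} (hA : IndepSet G A)
    (hB : IndepSet G B) (hBα : alpha G ≤ B.card) (hAB : Disjoint A B) (hcard : A.card = B.card) :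
    ∃ M : G.Subgraph, M.IsMatching ∧ M.verts = ↑A ∪ ↑B := by
  classical
  have hall (X : Finset A) : X.card ≤ (univ.filter fun b : B => ∃ a ∈ X, G.Adj a b).card := by
    have hX : X.map (Function.Embedding.subtype _) ⊆ A := by
      intro v hv
      obtain ⟨a, -, rfl⟩ := mem_map.mp hv
      exact a.2
    have := (hA.subset hX).card_le_card_inter_nbhd hB hBα (disjoint_of_subset_left hX hAB)
    convert this using 1
    · rw [card_map]
    · rw [← card_map (Function.Embedding.subtype _)]
      congr 1
      ext v
      simp [nbhd, and_comm]
  obtain ⟨f, hf, hfadj⟩ := (Fintype.all_card_le_filter_rel_iff_exists_injective _).mp hall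
  have hbij : Function.Bijective f :=
    (Fintype.bijective_iff_injective_and_card f).mpr ⟨hf, by simp [hcard]⟩
  obtain ⟨M, hverts, hM⟩ := SimpleGraph.Subgraph.IsMatching.exists_of_disjoint_sets_of_equiv
    (s := ↑A) (t := ↑B) (disjoint_coe.mpr hAB) (Equiv.ofBijective f hbij) (G := G) fun a => hfadj a
  exact ⟨M, hM, hverts⟩

end Hall

section MatchingNumber

variable {V : Type*} [Fintype V] {G : SimpleGraph V}

lemma le_matchNum {M : G.Subgraph} (hM : M.IsMatching) : M.edgeSet.ncard ≤ matchNum G := by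
  refine le_csSup ⟨Fintype.card V, ?_⟩ ⟨M, hM, rfl⟩
  rintro _ ⟨N, hN, rfl⟩
  have := hN.two_mul_ncard_edgeSet_le
  omega

lemma matchNum_le {n : ℕ} (h : ∀ M : G.Subgraph, M.IsMatching → M.edgeSet.ncard ≤ n) :
    matchNum G ≤ n :=
  csSup_le' <| by
    rintro _ ⟨M, hM, rfl⟩
    exact h M hM

end MatchingNumber

/-- In a connected W₂ graph other than K₂, α(G) ≤ μ(G) and α(G) + μ(G) ≤ |V(G)| - 1. -/
theorem stmt7 {V : Type*} [Fintype V] (G : SimpleGraph V)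
    (hconn : G.Connected) (hK2 : ¬ Nonempty (G ≃g (⊤ : SimpleGraph (Fin 2))))
    (h : W2 G) :
    alpha G ≤ matchNum G ∧ alpha G + matchNum G + 1 ≤ Fintype.card V := by
  obtain ⟨S₁, -, S₂, -, h₁, h₂, hc₁, hc₂, hd, -, -⟩ :=
    h ∅ (empty_subset _) ∅ (empty_subset _) indepSet_empty indepSet_empty (disjoint_empty_left _)
  obtain ⟨M, hM, hverts⟩ :=
    h₁.exists_isMatching_verts_eq_union h₂ hc₂.ge hd (hc₁.trans hc₂.symm)
  have hα := h.two_mul_alpha_lt_card hconn hK2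
  constructor
  · calc alpha G = S₁.card := hc₁.symm
      _ ≤ M.edgeSet.ncard := h₁.card_le_ncard_edgeSet hM (hverts ▸ Set.subset_union_left)
      _ ≤ matchNum G := le_matchNum hM
  · have hμ : matchNum G ≤ Fintype.card V - alpha G - 1 := matchNum_le fun N hN => by
      have := hN.ncard_edgeSet_add_card_le h₁
      have := hN.two_mul_ncard_edgeSet_le
      have : S₁.card = alpha G := hc₁
      omega
    omega
end
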